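/- arXiv:1706.03973 — 4 statements merged into one kernel-verified Lean document; each statement's English description precedes it below -/
import Mathlib

section
/- Let n ≥ 2, let A be a symmetric positive-definite n×n real matrix, let b ∈ ℝⁿ and y ∈ ℝⁿ with y ≠ 0, and set α = √(yᵀAy), b² = bᵀAb, s = (bᵀAy)/α, β = Ab and λ = ∂α/∂y. For a function φ = φ(b², s) with φ₂ = ∂φ/∂s and φ₂₂ = ∂²φ/∂s², put ρ = φ(φ − sφ₂), ρ₀ = φφ₂₂ + φ₂², ρ₁ = (φ − sφ₂)φ₂ − sφφ₂₂, and let g = (g_{ij}) = ρA + ρ₀ββᵀ + ρ₁(βλᵀ + λβᵀ) − sρ₁λλᵀ. Then det(g_{ij}) = φⁿ⁺¹(φ − sφ₂)ⁿ⁻²(φ − sφ₂ + (b² − s²)φ₂₂)·det(A). -/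
open Matrix

lemma keydet {n : ℕ} (hn : 2 ≤ n) (N : Matrix (Fin n) (Fin 2) ℝ)
    (W : Matrix (Fin 2) (Fin n) ℝ) (t : ℝ) :
    (t • (1 : Matrix (Fin n) (Fin n) ℝ) + N * W).det
      = t ^ (n - 2) * (t • (1 : Matrix (Fin 2) (Fin 2) ℝ) + W * N).det := by
  have hcong : (fun t : ℝ => (t • (1 : Matrix (Fin n) (Fin n) ℝ) + N * W).det)
      = fun t : ℝ => t ^ (n - 2) * (t • (1 : Matrix (Fin 2) (Fin 2) ℝ) + W * N).det := by
    apply Continuous.ext_on (dense_compl_singleton (0 : ℝ))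
    · exact Continuous.matrix_det (by continuity)
    · exact (continuous_pow _).mul (Continuous.matrix_det (by continuity))
    · intro t ht
      have ht0 : t ≠ 0 := ht
      have h1 : t • (1 : Matrix (Fin n) (Fin n) ℝ) + N * W
          = t • ((1 : Matrix (Fin n) (Fin n) ℝ) + (t⁻¹ • N) * W) := by
        rw [smul_add, Matrix.smul_mul, smul_smul, mul_inv_cancel₀ ht0, one_smul]
      have h2 : t • (1 : Matrix (Fin 2) (Fin 2) ℝ) + W * N
          = t • ((1 : Matrix (Fin 2) (Fin 2) ℝ) + W * (t⁻¹ • N)) := by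
        rw [smul_add, Matrix.mul_smul, smul_smul, mul_inv_cancel₀ ht0, one_smul]
      simp only [h1, h2, det_smul, Fintype.card_fin]
      rw [Matrix.det_one_add_mul_comm]
      rw [← mul_assoc, ← pow_add]
      congr 2
      omega
  exact congrFun hcong t

lemma lincomb {n : ℕ} (c1 c2 : ℝ) (u v w : Fin n → ℝ) :
    (fun j => c1 * u j + c2 * v j) ⬝ᵥ w = c1 * (u ⬝ᵥ w) + c2 * (v ⬝ᵥ w) := by
  simp [dotProduct, add_mul, mul_assoc, Finset.sum_add_distrib, Finset.mul_sum]

lemma lincomb' {n : ℕ} (c1 c2 : ℝ) (u v w : Fin n → ℝ) :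
    (fun j => c1 * u j - c2 * v j) ⬝ᵥ w = c1 * (u ⬝ᵥ w) - c2 * (v ⬝ᵥ w) := by
  simp [dotProduct, sub_mul, mul_assoc, Finset.sum_sub_distrib, Finset.mul_sum]

/-- determinant of the fundamental tensor of a general
    (α,β)-metric:
    det(g) = φ^{n+1}(φ−sφ₂)^{n−2}(φ−sφ₂+(b²−s²)φ₂₂)·det(a). -/
theorem stmt_5 {n : ℕ} (hn : 2 ≤ n) (A : Matrix (Fin n) (Fin n) ℝ)
    (hA : A.PosDef) (b y : Fin n → ℝ) (hy : y ≠ 0)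
    (φ : ℝ → ℝ → ℝ)
    (hφ : ContDiff ℝ (⊤ : ℕ∞) (fun p : ℝ × ℝ => φ p.1 p.2)) :
    let α : ℝ := Real.sqrt (y ⬝ᵥ A.mulVec y)
    let s : ℝ := (b ⬝ᵥ y) / α
    let b2 : ℝ := b ⬝ᵥ A⁻¹.mulVec b
    let l : Fin n → ℝ := fun i => A.mulVec y i / α
    let p : ℝ := φ b2 s
    let p2 : ℝ := deriv (φ b2) s
    let p22 : ℝ := deriv (deriv (φ b2)) s
    let ρ : ℝ := p * (p - s * p2)
    let ρ0 : ℝ := p * p22 + p2 ^ 2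
    let ρ1 : ℝ := (p - s * p2) * p2 - s * p * p22
    let g : Matrix (Fin n) (Fin n) ℝ := fun i j =>
      ρ * A i j + ρ0 * b i * b j + ρ1 * (b i * l j + b j * l i) -
        s * ρ1 * l i * l j
    g.det = p ^ (n + 1) * (p - s * p2) ^ (n - 2) *
      (p - s * p2 + (b2 - s ^ 2) * p22) * A.det := by
  intro α s b2 l p p2 p22 ρ ρ0 ρ1 g
  have h0 : 0 < y ⬝ᵥ A.mulVec y := by
    have := hA.dotProduct_mulVec_pos hy
    simpa using this
  have hα : 0 < α := Real.sqrt_pos.2 h0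
  have hα0 : α ≠ 0 := ne_of_gt hα
  have hα2 : α * α = y ⬝ᵥ A.mulVec y := Real.mul_self_sqrt h0.le
  have hdet : IsUnit A.det := (hA.det_pos).ne'.isUnit
  have hAinv : A * A⁻¹ = 1 := A.mul_nonsing_inv hdet
  have hinvA : A⁻¹ * A = 1 := A.nonsing_inv_mul hdet
  have hl : A⁻¹.mulVec l = α⁻¹ • y := by
    have hll : l = α⁻¹ • A.mulVec y := by
      funext i; simp [l, smul_eq_mul, div_eq_inv_mul]
    rw [hll, Matrix.mulVec_smul, Matrix.mulVec_mulVec, hinvA, Matrix.one_mulVec]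
  have hsyminv : A⁻¹.transpose = A⁻¹ := by
    rw [Matrix.transpose_nonsing_inv]
    congr 1
    simpa [Matrix.conjTranspose_eq_transpose_of_trivial] using hA.1.eq
  have d1 : b ⬝ᵥ A⁻¹.mulVec b = b2 := rfl
  have d2 : b ⬝ᵥ A⁻¹.mulVec l = s := by
    rw [hl, dotProduct_smul, smul_eq_mul]
    simp [s, div_eq_inv_mul]
  have d3 : l ⬝ᵥ A⁻¹.mulVec b = s := by
    rw [Matrix.dotProduct_mulVec, ← Matrix.mulVec_transpose, hsyminv, dotProduct_comm]
    exact d2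
  have d4 : l ⬝ᵥ A⁻¹.mulVec l = 1 := by
    rw [hl, dotProduct_smul, smul_eq_mul]
    have hly : l ⬝ᵥ y = α := by
      have h1 : l ⬝ᵥ y = (y ⬝ᵥ A.mulVec y) / α := by
        simp only [l, dotProduct, div_mul_eq_mul_div, ← Finset.sum_div]
        congr 1
        apply Finset.sum_congr rfl
        intros; ring
      rw [h1, ← hα2, mul_div_assoc, div_self hα0, mul_one]
    rw [hly, inv_mul_cancel₀ hα0]
  -- rank-two decomposition
  set U : Matrix (Fin n) (Fin 2) ℝ := Matrix.of fun i k => ![b i, l i] k with hU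
  set W : Matrix (Fin 2) (Fin n) ℝ :=
    Matrix.of ![fun j => ρ0 * b j + ρ1 * l j, fun j => ρ1 * b j - s * ρ1 * l j] with hW
  have hg : g = A * (ρ • 1 + A⁻¹ * (U * W)) := by
    have h1 : A * (ρ • 1 + A⁻¹ * (U * W)) = ρ • A + U * W := by
      rw [Matrix.mul_add, Matrix.mul_smul, Matrix.mul_one, ← Matrix.mul_assoc, hAinv,
        Matrix.one_mul]
    rw [h1]
    funext i j
    simp [g, hU, hW, Matrix.mul_apply, Fin.sum_univ_two, Matrix.add_apply, Matrix.smul_apply,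
      smul_eq_mul]
    ring
  have hWU : W * (A⁻¹ * U) = Matrix.of ![![ρ0 * b2 + ρ1 * s, ρ0 * s + ρ1 * 1],
      ![ρ1 * b2 - s * ρ1 * s, ρ1 * s - s * ρ1 * 1]] := by
    funext k m
    fin_cases k <;> fin_cases m
    · show (fun j => ρ0 * b j + ρ1 * l j) ⬝ᵥ A⁻¹.mulVec b = ρ0 * b2 + ρ1 * s
      rw [lincomb, d1, d3]
    · show (fun j => ρ0 * b j + ρ1 * l j) ⬝ᵥ A⁻¹.mulVec l = ρ0 * s + ρ1 * 1
      rw [lincomb, d2, d4]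
    · show (fun j => ρ1 * b j - s * ρ1 * l j) ⬝ᵥ A⁻¹.mulVec b = ρ1 * b2 - s * ρ1 * s
      rw [lincomb', d1, d3]
    · show (fun j => ρ1 * b j - s * ρ1 * l j) ⬝ᵥ A⁻¹.mulVec l = ρ1 * s - s * ρ1 * 1
      rw [lincomb', d2, d4]
  have hdet2 : (ρ • (1 : Matrix (Fin 2) (Fin 2) ℝ) + Matrix.of ![![ρ0 * b2 + ρ1 * s, ρ0 * s + ρ1 * 1],
      ![ρ1 * b2 - s * ρ1 * s, ρ1 * s - s * ρ1 * 1]]).det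
      = p ^ 3 * (p - s * p2 + (b2 - s ^ 2) * p22) := by
    rw [Matrix.det_fin_two]
    simp only [Matrix.add_apply, Matrix.smul_apply, Matrix.one_apply, Matrix.of_apply,
      Matrix.cons_val', Matrix.cons_val_zero, Matrix.cons_val_one, Matrix.head_cons,
      Matrix.empty_val', Matrix.cons_val_fin_one, Matrix.head_fin_const, smul_eq_mul]
    norm_num
    show (p * (p - s * p2) + ((p * p22 + p2 ^ 2) * b2 + ((p - s * p2) * p2 - s * p * p22) * s)) *
        (p * (p - s * p2) + (((p - s * p2) * p2 - s * p * p22) * s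
          - s * ((p - s * p2) * p2 - s * p * p22))) -
        ((p * p22 + p2 ^ 2) * s + ((p - s * p2) * p2 - s * p * p22)) *
        (((p - s * p2) * p2 - s * p * p22) * b2 - s * ((p - s * p2) * p2 - s * p * p22) * s)
      = p ^ 3 * (p - s * p2 + (b2 - s ^ 2) * p22)
    ring
  have hpow : ρ ^ (n - 2) * p ^ 3 = p ^ (n + 1) * (p - s * p2) ^ (n - 2) := by
    show (p * (p - s * p2)) ^ (n - 2) * p ^ 3 = _
    rw [mul_pow, mul_right_comm, ← pow_add]
    congr 2
    omega
  rw [hg, Matrix.det_mul, ← Matrix.mul_assoc A⁻¹ U W, keydet hn (A⁻¹ * U) W ρ, hWU, hdet2]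
  rw [show A.det * (ρ ^ (n - 2) * (p ^ 3 * (p - s * p2 + (b2 - s ^ 2) * p22)))
      = (ρ ^ (n - 2) * p ^ 3) * ((p - s * p2 + (b2 - s ^ 2) * p22) * A.det) from by ring, hpow]
  ring
end

section
/- With the notation of the fundamental tensor g_{ij} = ρa_{ij} + ρ₀b_ib_j + ρ₁(b_iλ_j + b_jλ_i) − sρ₁λ_iλ_j of a general (α,β)-metric, the matrix (1/ρ)·(a^{ij} + η b^i b^j + η₀ α^{-1}(b^i y^j + b^j y^i) + η₁ α^{-2} y^i y^j) is the inverse of (g_{ij}), where η = −φ₂₂/Δ, η₀ = −((φ−sφ₂)φ₂ − sφφ₂₂)/(φΔ), η₁ = (sφ+(b²−s²)φ₂)((φ−sφ₂)φ₂ − sφφ₂₂)/(φ²Δ), and Δ = φ − sφ₂ + (b²−s²)φ₂₂, assuming φ > 0, φ − sφ₂ > 0, Δ > 0. -/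
open Matrix

set_option maxHeartbeats 1000000 in
theorem scalar_key (p p2 p22 s b2 al t BI YI BJ LJ : ℝ)
    (hpne : p ≠ 0) (hpsne : p - s * p2 ≠ 0)
    (hΔne : p - s * p2 + (b2 - s ^ 2) * p22 ≠ 0) (hαne : al ≠ 0) :
    1 / (p * (p - s * p2)) * (p * (p - s * p2)) * t +
    1 / (p * (p - s * p2)) * ((p * p22 + p2 ^ 2) * BJ + ((p - s * p2) * p2 - s * p * p22) * LJ) * BI +
    1 / (p * (p - s * p2)) * (((p - s * p2) * p2 - s * p * p22) * BJ - s * ((p - s * p2) * p2 - s * p * p22) * LJ) * (YI / al) +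
    1 / (p * (p - s * p2)) * (-p22 / (p - s * p2 + (b2 - s ^ 2) * p22) * BI + (-((p - s * p2) * p2 - s * p * p22) / (p * (p - s * p2 + (b2 - s ^ 2) * p22))) * al⁻¹ * YI) * (p * (p - s * p2)) * BJ +
    1 / (p * (p - s * p2)) * (-p22 / (p - s * p2 + (b2 - s ^ 2) * p22) * BI + (-((p - s * p2) * p2 - s * p * p22) / (p * (p - s * p2 + (b2 - s ^ 2) * p22))) * al⁻¹ * YI) * ((p * p22 + p2 ^ 2) * BJ + ((p - s * p2) * p2 - s * p * p22) * LJ) * b2 +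
    1 / (p * (p - s * p2)) * (-p22 / (p - s * p2 + (b2 - s ^ 2) * p22) * BI + (-((p - s * p2) * p2 - s * p * p22) / (p * (p - s * p2 + (b2 - s ^ 2) * p22))) * al⁻¹ * YI) * (((p - s * p2) * p2 - s * p * p22) * BJ - s * ((p - s * p2) * p2 - s * p * p22) * LJ) * s +
    1 / (p * (p - s * p2)) * ((-((p - s * p2) * p2 - s * p * p22) / (p * (p - s * p2 + (b2 - s ^ 2) * p22))) * al⁻¹ * BI + (s * p + (b2 - s ^ 2) * p2) * ((p - s * p2) * p2 - s * p * p22) / (p ^ 2 * (p - s * p2 + (b2 - s ^ 2) * p22)) * al⁻¹ ^ 2 * YI) * (p * (p - s * p2)) * (al * LJ) +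
    1 / (p * (p - s * p2)) * ((-((p - s * p2) * p2 - s * p * p22) / (p * (p - s * p2 + (b2 - s ^ 2) * p22))) * al⁻¹ * BI + (s * p + (b2 - s ^ 2) * p2) * ((p - s * p2) * p2 - s * p * p22) / (p ^ 2 * (p - s * p2 + (b2 - s ^ 2) * p22)) * al⁻¹ ^ 2 * YI) * ((p * p22 + p2 ^ 2) * BJ + ((p - s * p2) * p2 - s * p * p22) * LJ) * (s * al) +
    1 / (p * (p - s * p2)) * ((-((p - s * p2) * p2 - s * p * p22) / (p * (p - s * p2 + (b2 - s ^ 2) * p22))) * al⁻¹ * BI + (s * p + (b2 - s ^ 2) * p2) * ((p - s * p2) * p2 - s * p * p22) / (p ^ 2 * (p - s * p2 + (b2 - s ^ 2) * p22)) * al⁻¹ ^ 2 * YI) * (((p - s * p2) * p2 - s * p * p22) * BJ - s * ((p - s * p2) * p2 - s * p * p22) * LJ) * al = t := by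
  have hD : (p ^ 3 * (p - s * p2) * (p - s * p2 + (b2 - s ^ 2) * p22) * al) ≠ 0 :=
    mul_ne_zero (mul_ne_zero (mul_ne_zero (pow_ne_zero 3 hpne) hpsne) hΔne) hαne
  have e1 : 1 / (p * (p - s * p2)) * (p * (p - s * p2)) * t = (t * (p ^ 3 * (p - s * p2) * (p - s * p2 + (b2 - s ^ 2) * p22) * al)) / (p ^ 3 * (p - s * p2) * (p - s * p2 + (b2 - s ^ 2) * p22) * al) := by
    rw [eq_div_iff hD]
    generalize p - s * p2 + (b2 - s ^ 2) * p22 = D at hΔne ⊢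
    field_simp
    try ring
  have e2 : 1 / (p * (p - s * p2)) * ((p * p22 + p2 ^ 2) * BJ + ((p - s * p2) * p2 - s * p * p22) * LJ) * BI = (((p * p22 + p2 ^ 2) * BJ + ((p - s * p2) * p2 - s * p * p22) * LJ) * BI * (p ^ 2 * (p - s * p2 + (b2 - s ^ 2) * p22) * al)) / (p ^ 3 * (p - s * p2) * (p - s * p2 + (b2 - s ^ 2) * p22) * al) := by
    rw [eq_div_iff hD]
    generalize p - s * p2 + (b2 - s ^ 2) * p22 = D at hΔne ⊢
    field_simp
    try ring
  have e3 : 1 / (p * (p - s * p2)) * (((p - s * p2) * p2 - s * p * p22) * BJ - s * ((p - s * p2) * p2 - s * p * p22) * LJ) * (YI / al) = ((((p - s * p2) * p2 - s * p * p22) * BJ - s * ((p - s * p2) * p2 - s * p * p22) * LJ) * YI * (p ^ 2 * (p - s * p2 + (b2 - s ^ 2) * p22))) / (p ^ 3 * (p - s * p2) * (p - s * p2 + (b2 - s ^ 2) * p22) * al) := by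
    rw [eq_div_iff hD]
    generalize p - s * p2 + (b2 - s ^ 2) * p22 = D at hΔne ⊢
    field_simp
    try ring
  have e4 : 1 / (p * (p - s * p2)) * (-p22 / (p - s * p2 + (b2 - s ^ 2) * p22) * BI + (-((p - s * p2) * p2 - s * p * p22) / (p * (p - s * p2 + (b2 - s ^ 2) * p22))) * al⁻¹ * YI) * (p * (p - s * p2)) * BJ = ((-(p22 * p * al * BI) - ((p - s * p2) * p2 - s * p * p22) * YI) * (p ^ 2 * (p - s * p2)) * BJ) / (p ^ 3 * (p - s * p2) * (p - s * p2 + (b2 - s ^ 2) * p22) * al) := by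
    rw [eq_div_iff hD]
    generalize p - s * p2 + (b2 - s ^ 2) * p22 = D at hΔne ⊢
    field_simp
    try ring
  have e5 : 1 / (p * (p - s * p2)) * (-p22 / (p - s * p2 + (b2 - s ^ 2) * p22) * BI + (-((p - s * p2) * p2 - s * p * p22) / (p * (p - s * p2 + (b2 - s ^ 2) * p22))) * al⁻¹ * YI) * ((p * p22 + p2 ^ 2) * BJ + ((p - s * p2) * p2 - s * p * p22) * LJ) * b2 = ((-(p22 * p * al * BI) - ((p - s * p2) * p2 - s * p * p22) * YI) * p * ((p * p22 + p2 ^ 2) * BJ + ((p - s * p2) * p2 - s * p * p22) * LJ) * b2) / (p ^ 3 * (p - s * p2) * (p - s * p2 + (b2 - s ^ 2) * p22) * al) := by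
    rw [eq_div_iff hD]
    generalize p - s * p2 + (b2 - s ^ 2) * p22 = D at hΔne ⊢
    field_simp
    try ring
  have e6 : 1 / (p * (p - s * p2)) * (-p22 / (p - s * p2 + (b2 - s ^ 2) * p22) * BI + (-((p - s * p2) * p2 - s * p * p22) / (p * (p - s * p2 + (b2 - s ^ 2) * p22))) * al⁻¹ * YI) * (((p - s * p2) * p2 - s * p * p22) * BJ - s * ((p - s * p2) * p2 - s * p * p22) * LJ) * s = ((-(p22 * p * al * BI) - ((p - s * p2) * p2 - s * p * p22) * YI) * p * (((p - s * p2) * p2 - s * p * p22) * BJ - s * ((p - s * p2) * p2 - s * p * p22) * LJ) * s) / (p ^ 3 * (p - s * p2) * (p - s * p2 + (b2 - s ^ 2) * p22) * al) := by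
    rw [eq_div_iff hD]
    generalize p - s * p2 + (b2 - s ^ 2) * p22 = D at hΔne ⊢
    field_simp
    try ring
  have e7 : 1 / (p * (p - s * p2)) * ((-((p - s * p2) * p2 - s * p * p22) / (p * (p - s * p2 + (b2 - s ^ 2) * p22))) * al⁻¹ * BI + (s * p + (b2 - s ^ 2) * p2) * ((p - s * p2) * p2 - s * p * p22) / (p ^ 2 * (p - s * p2 + (b2 - s ^ 2) * p22)) * al⁻¹ ^ 2 * YI) * (p * (p - s * p2)) * (al * LJ) = ((-(((p - s * p2) * p2 - s * p * p22) * p * al * BI) + (s * p + (b2 - s ^ 2) * p2) * ((p - s * p2) * p2 - s * p * p22) * YI) * (p * (p - s * p2)) * LJ) / (p ^ 3 * (p - s * p2) * (p - s * p2 + (b2 - s ^ 2) * p22) * al) := by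
    rw [eq_div_iff hD]
    generalize p - s * p2 + (b2 - s ^ 2) * p22 = D at hΔne ⊢
    field_simp
    try ring
  have e8 : 1 / (p * (p - s * p2)) * ((-((p - s * p2) * p2 - s * p * p22) / (p * (p - s * p2 + (b2 - s ^ 2) * p22))) * al⁻¹ * BI + (s * p + (b2 - s ^ 2) * p2) * ((p - s * p2) * p2 - s * p * p22) / (p ^ 2 * (p - s * p2 + (b2 - s ^ 2) * p22)) * al⁻¹ ^ 2 * YI) * ((p * p22 + p2 ^ 2) * BJ + ((p - s * p2) * p2 - s * p * p22) * LJ) * (s * al) = ((-(((p - s * p2) * p2 - s * p * p22) * p * al * BI) + (s * p + (b2 - s ^ 2) * p2) * ((p - s * p2) * p2 - s * p * p22) * YI) * ((p * p22 + p2 ^ 2) * BJ + ((p - s * p2) * p2 - s * p * p22) * LJ) * s) / (p ^ 3 * (p - s * p2) * (p - s * p2 + (b2 - s ^ 2) * p22) * al) := by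
    rw [eq_div_iff hD]
    generalize p - s * p2 + (b2 - s ^ 2) * p22 = D at hΔne ⊢
    field_simp
    try ring
  have e9 : 1 / (p * (p - s * p2)) * ((-((p - s * p2) * p2 - s * p * p22) / (p * (p - s * p2 + (b2 - s ^ 2) * p22))) * al⁻¹ * BI + (s * p + (b2 - s ^ 2) * p2) * ((p - s * p2) * p2 - s * p * p22) / (p ^ 2 * (p - s * p2 + (b2 - s ^ 2) * p22)) * al⁻¹ ^ 2 * YI) * (((p - s * p2) * p2 - s * p * p22) * BJ - s * ((p - s * p2) * p2 - s * p * p22) * LJ) * al = ((-(((p - s * p2) * p2 - s * p * p22) * p * al * BI) + (s * p + (b2 - s ^ 2) * p2) * ((p - s * p2) * p2 - s * p * p22) * YI) * (((p - s * p2) * p2 - s * p * p22) * BJ - s * ((p - s * p2) * p2 - s * p * p22) * LJ)) / (p ^ 3 * (p - s * p2) * (p - s * p2 + (b2 - s ^ 2) * p22) * al) := by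
    rw [eq_div_iff hD]
    generalize p - s * p2 + (b2 - s ^ 2) * p22 = D at hΔne ⊢
    field_simp
    try ring
  rw [e1, e2, e3, e4, e5, e6, e7, e8, e9,
    ← add_div, ← add_div, ← add_div, ← add_div, ← add_div, ← add_div, ← add_div, ← add_div, div_eq_iff hD]
  ring

/-- the explicit formula for the inverse of the fundamental
    tensor of a general (α,β)-metric. -/
theorem stmt_6 {n : ℕ} (hn : 2 ≤ n) (A : Matrix (Fin n) (Fin n) ℝ)
    (hA : A.PosDef) (b y : Fin n → ℝ) (hy : y ≠ 0)
    (φ : ℝ → ℝ → ℝ)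
    (hφ : ContDiff ℝ (⊤ : ℕ∞) (fun p : ℝ × ℝ => φ p.1 p.2)) :
    let α : ℝ := Real.sqrt (y ⬝ᵥ A.mulVec y)
    let s : ℝ := (b ⬝ᵥ y) / α
    let b2 : ℝ := b ⬝ᵥ A⁻¹.mulVec b
    let l : Fin n → ℝ := fun i => A.mulVec y i / α
    let bu : Fin n → ℝ := A⁻¹.mulVec b
    let p : ℝ := φ b2 s
    let p2 : ℝ := deriv (φ b2) s
    let p22 : ℝ := deriv (deriv (φ b2)) s
    let Δ : ℝ := p - s * p2 + (b2 - s ^ 2) * p22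
    let ρ : ℝ := p * (p - s * p2)
    let ρ0 : ℝ := p * p22 + p2 ^ 2
    let ρ1 : ℝ := (p - s * p2) * p2 - s * p * p22
    let η : ℝ := -p22 / Δ
    let η0 : ℝ := -((p - s * p2) * p2 - s * p * p22) / (p * Δ)
    let η1 : ℝ := (s * p + (b2 - s ^ 2) * p2) *
      ((p - s * p2) * p2 - s * p * p22) / (p ^ 2 * Δ)
    let g : Matrix (Fin n) (Fin n) ℝ := fun i j =>
      ρ * A i j + ρ0 * b i * b j + ρ1 * (b i * l j + b j * l i) -
        s * ρ1 * l i * l j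
    let G : Matrix (Fin n) (Fin n) ℝ := fun i j =>
      (1 / ρ) * (A⁻¹ i j + η * bu i * bu j +
        η0 * α⁻¹ * (bu i * y j + bu j * y i) + η1 * α⁻¹ ^ 2 * y i * y j)
    0 < p → 0 < p - s * p2 → 0 < Δ → G * g = 1 ∧ g * G = 1 := by
  intro α s b2 l bu p p2 p22 Δ ρ ρ0 ρ1 η η0 η1 g G hp hps hΔ
  -- basic facts
  have hyy : 0 < y ⬝ᵥ A.mulVec y := by simpa using hA.dotProduct_mulVec_pos hy
  have hα : 0 < α := Real.sqrt_pos.2 hyy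
  have hαne : α ≠ 0 := ne_of_gt hα
  have hα2 : α ^ 2 = y ⬝ᵥ A.mulVec y := Real.sq_sqrt hyy.le
  have hdet : IsUnit A.det := isUnit_iff_ne_zero.2 (ne_of_gt hA.det_pos)
  have hinv : A⁻¹ * A = 1 := Matrix.nonsing_inv_mul A hdet
  have hinv' : A * A⁻¹ = 1 := Matrix.mul_nonsing_inv A hdet
  have hsym : ∀ i j, A i j = A j i := fun i j => by
    have := hA.1.apply i j; simpa using this.symm
  -- nonzero scalars (stated in unfolded form; defeq to the lets)
  have hpne : p ≠ 0 := ne_of_gt hp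
  have hpsne : p - s * p2 ≠ 0 := ne_of_gt hps
  have hΔne : p - s * p2 + (b2 - s ^ 2) * p22 ≠ 0 := ne_of_gt hΔ
  -- entry formulas
  have hGe : ∀ i k, G i k = (1 / ρ) * (A⁻¹ i k + η * bu i * bu k +
      η0 * α⁻¹ * (bu i * y k + bu k * y i) + η1 * α⁻¹ ^ 2 * y i * y k) := fun _ _ => rfl
  have hge : ∀ k j, g k j = ρ * A k j + ρ0 * b k * b j + ρ1 * (b k * l j + b j * l k) -
      s * ρ1 * l k * l j := fun _ _ => rfl
  have hle : ∀ k, l k = A.mulVec y k / α := fun _ => rfl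
  have hbue : ∀ k, bu k = A⁻¹.mulVec b k := fun _ => rfl
  -- sum lemmas
  have hS1 : ∀ i j, ∑ k, A⁻¹ i k * A k j = (1 : Matrix (Fin n) (Fin n) ℝ) i j := by
    intro i j
    rw [← Matrix.mul_apply, hinv]
  have hS2 : ∀ i, ∑ k, A⁻¹ i k * b k = bu i := fun i => rfl
  have hAAy : A⁻¹.mulVec (A.mulVec y) = y := by
    rw [Matrix.mulVec_mulVec, hinv, Matrix.one_mulVec]
  have hS3 : ∀ i, ∑ k, A⁻¹ i k * l k = y i / α := by
    intro i
    have : ∑ k, A⁻¹ i k * l k = (∑ k, A⁻¹ i k * A.mulVec y k) / α := by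
      rw [Finset.sum_div]
      exact Finset.sum_congr rfl fun k _ => by rw [hle k]; ring
    rw [this]
    have h2 : ∑ k, A⁻¹ i k * A.mulVec y k = y i := by
      conv_rhs => rw [← hAAy]
      rfl
    rw [h2]
  have hAbu : A.mulVec bu = b := by
    show A.mulVec (A⁻¹.mulVec b) = b
    rw [Matrix.mulVec_mulVec, hinv', Matrix.one_mulVec]
  have hS4 : ∀ j, ∑ k, bu k * A k j = b j := by
    intro j
    have : ∑ k, bu k * A k j = ∑ k, A j k * bu k :=
      Finset.sum_congr rfl fun k _ => by rw [hsym k j]; ring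
    rw [this]
    conv_rhs => rw [← hAbu]
    rfl
  have hS5 : ∑ k, bu k * b k = b2 := by
    have : b2 = ∑ k, b k * bu k := rfl
    rw [this]
    exact Finset.sum_congr rfl fun k _ => mul_comm _ _
  have hS6 : ∑ k, bu k * l k = s := by
    have h1 : ∑ k, bu k * l k = (∑ k, bu k * A.mulVec y k) / α := by
      rw [Finset.sum_div]
      exact Finset.sum_congr rfl fun k _ => by rw [hle k]; ring
    have h2 : ∑ k, bu k * A.mulVec y k = b ⬝ᵥ y := by
      have : (∑ k, bu k * A.mulVec y k) = bu ⬝ᵥ A.mulVec y := rfl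
      rw [this, Matrix.dotProduct_mulVec]
      have hv : Matrix.vecMul bu A = b := by
        funext j
        show ∑ k, bu k * A k j = b j
        exact hS4 j
      rw [hv]
    rw [h1, h2]
  have hS7 : ∀ j, ∑ k, y k * A k j = α * l j := by
    intro j
    have h1 : ∑ k, y k * A k j = ∑ k, A j k * y k :=
      Finset.sum_congr rfl fun k _ => by rw [hsym k j]; ring
    have h2 : ∑ k, A j k * y k = A.mulVec y j := rfl
    rw [h1, h2, hle j]
    field_simp
  have hS8 : ∑ k, y k * b k = s * α := by
    have h1 : ∑ k, y k * b k = b ⬝ᵥ y :=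
      Finset.sum_congr rfl fun k _ => mul_comm _ _
    have h2 : s * α = b ⬝ᵥ y := by
      show (b ⬝ᵥ y) / α * α = b ⬝ᵥ y
      field_simp
    rw [h1, h2]
  have hS9 : ∑ k, y k * l k = α := by
    have h1 : ∑ k, y k * l k = (∑ k, y k * A.mulVec y k) / α := by
      rw [Finset.sum_div]
      exact Finset.sum_congr rfl fun k _ => by rw [hle k]; ring
    have h2 : ∑ k, y k * A.mulVec y k = y ⬝ᵥ A.mulVec y := rfl
    rw [h1, h2, ← hα2]
    field_simp
  have key : G * g = 1 := by
    ext i j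
    rw [Matrix.mul_apply]
    have expand : ∀ k, G i k * g k j =
        ((1 / ρ) * ρ) * (A⁻¹ i k * A k j) +
        ((1 / ρ) * (ρ0 * b j + ρ1 * l j)) * (A⁻¹ i k * b k) +
        ((1 / ρ) * (ρ1 * b j - s * ρ1 * l j)) * (A⁻¹ i k * l k) +
        ((1 / ρ) * (η * bu i + η0 * α⁻¹ * y i) * ρ) * (bu k * A k j) +
        ((1 / ρ) * (η * bu i + η0 * α⁻¹ * y i) * (ρ0 * b j + ρ1 * l j)) * (bu k * b k) +
        ((1 / ρ) * (η * bu i + η0 * α⁻¹ * y i) * (ρ1 * b j - s * ρ1 * l j)) * (bu k * l k) +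
        ((1 / ρ) * (η0 * α⁻¹ * bu i + η1 * α⁻¹ ^ 2 * y i) * ρ) * (y k * A k j) +
        ((1 / ρ) * (η0 * α⁻¹ * bu i + η1 * α⁻¹ ^ 2 * y i) * (ρ0 * b j + ρ1 * l j)) * (y k * b k) +
        ((1 / ρ) * (η0 * α⁻¹ * bu i + η1 * α⁻¹ ^ 2 * y i) * (ρ1 * b j - s * ρ1 * l j)) * (y k * l k) := by
      intro k
      rw [hGe i k, hge k j]
      ring
    simp only [expand]
    rw [Finset.sum_add_distrib, Finset.sum_add_distrib, Finset.sum_add_distrib,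
      Finset.sum_add_distrib, Finset.sum_add_distrib, Finset.sum_add_distrib,
      Finset.sum_add_distrib, Finset.sum_add_distrib]
    simp only [← Finset.mul_sum]
    rw [hS1 i j, hS2 i, hS3 i, hS4 j, hS5, hS6, hS7 j, hS8, hS9]
    generalize (1 : Matrix (Fin n) (Fin n) ℝ) i j = t
    exact scalar_key p p2 p22 s b2 α t (bu i) (y i) (b j) (l j) hpne hpsne hΔne hαne
  exact ⟨key, mul_eq_one_comm.mp key⟩
end

section
/- Define Q = φ₂/(φ−sφ₂), R = φ₁/(φ−sφ₂), Θ = ((φ−sφ₂)φ₂ − sφφ₂₂)/(2φΔ), Ψ = φ₂₂/(2Δ), Π = ((φ−sφ₂)φ₁₂ − sφ₁φ₂₂)/((φ−sφ₂)Δ), Ω = 2φ₁/φ − (sφ+(b²−s²)φ₂)/φ·Π, with Δ = φ−sφ₂+(b²−s²)φ₂₂. Then the combination E := Θ(1+2Rb²) + sΩ equals (φ₂+2sφ₁)/(2φ) − H·(sφ+(b²−s²)φ₂)/φ, where H := Ψ(1+2Rb²) + sΠ − R = (φ₂₂ − 2(φ₁ − sφ₁₂))/(2Δ). -/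
/-!
Write `K = sφ + (b² − s²)φ₂`, so that `Ω = 2φ₁/φ − (K/φ)·Π`. Adding `H·K/φ` to `E` cancels the
`Π`-terms and leaves `(Θ + Ψ·K/φ)(1 + 2Rb²) + 2sφ₁/φ − R·K/φ`. Two cancellations finish the proof:
`Θ + Ψ·K/φ = φ₂/(2φ)`, because the `φ₂₂`-terms of its numerator recombine into `φ₂·Δ`, and
`b²φ₂ − K = −s(φ − sφ₂)`, so `R(b²φ₂ − K) = −sφ₁`. The closed form of `H` rests on
`Δ − (b² − s²)φ₂₂ = φ − sφ₂`.
-/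

section SprayCoefficients

variable {𝕜 : Type*} [Field 𝕜] {φ φ1 φ2 φ12 φ22 s b2 Δ : 𝕜}

theorem ratio_mul_sub_eq_neg (hreg : φ - s * φ2 ≠ 0) :
    φ1 / (φ - s * φ2) * (b2 * φ2 - (s * φ + (b2 - s ^ 2) * φ2)) = -(s * φ1) := by
  rw [show b2 * φ2 - (s * φ + (b2 - s ^ 2) * φ2) = -s * (φ - s * φ2) by ring]
  field_simp

theorem theta_add_psi_mul_eq [NeZero (2 : 𝕜)] (hφ : φ ≠ 0) (hΔ0 : Δ ≠ 0)
    (hΔ : Δ = φ - s * φ2 + (b2 - s ^ 2) * φ22) :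
    ((φ - s * φ2) * φ2 - s * φ * φ22) / (2 * φ * Δ)
        + φ22 / (2 * Δ) * ((s * φ + (b2 - s ^ 2) * φ2) / φ) = φ2 / (2 * φ) := by
  have hnum : (φ - s * φ2) * φ2 - s * φ * φ22 + φ22 * (s * φ + (b2 - s ^ 2) * φ2) = φ2 * Δ := by
    rw [hΔ]; ring
  field_simp
  linear_combination hnum

theorem psi_add_pi_sub_ratio_eq [NeZero (2 : 𝕜)] (hreg : φ - s * φ2 ≠ 0) (hΔ0 : Δ ≠ 0)
    (hΔ : Δ = φ - s * φ2 + (b2 - s ^ 2) * φ22) :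
    φ22 / (2 * Δ) * (1 + 2 * (φ1 / (φ - s * φ2)) * b2)
        + s * (((φ - s * φ2) * φ12 - s * φ1 * φ22) / ((φ - s * φ2) * Δ))
        - φ1 / (φ - s * φ2) = (φ22 - 2 * (φ1 - s * φ12)) / (2 * Δ) := by
  have hreduce : Δ - (b2 - s ^ 2) * φ22 = φ - s * φ2 := by rw [hΔ]; ring
  field_simp
  linear_combination (-2 * φ1) * hreduce

end SprayCoefficients

/-- the spray-coefficient combination Θ(1+2Rb²) + sΩ equals
    (φ₂+2sφ₁)/(2φ) − H·(sφ+(b²−s²)φ₂)/φ with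
    H = Ψ(1+2Rb²)+sΠ−R = (φ₂₂−2(φ₁−sφ₁₂))/(2Δ). -/
theorem stmt_11 (φ φ1 φ2 φ12 φ22 s b2 : ℝ)
    (hφ : φ ≠ 0) (hreg : φ - s * φ2 ≠ 0)
    (hΔ : φ - s * φ2 + (b2 - s ^ 2) * φ22 ≠ 0) :
    let Δ : ℝ := φ - s * φ2 + (b2 - s ^ 2) * φ22
    let Q : ℝ := φ2 / (φ - s * φ2)
    let R : ℝ := φ1 / (φ - s * φ2)
    let Θ : ℝ := ((φ - s * φ2) * φ2 - s * φ * φ22) / (2 * φ * Δ)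
    let Ψ : ℝ := φ22 / (2 * Δ)
    let Pi : ℝ := ((φ - s * φ2) * φ12 - s * φ1 * φ22) / ((φ - s * φ2) * Δ)
    let Ω : ℝ := 2 * φ1 / φ - (s * φ + (b2 - s ^ 2) * φ2) / φ * Pi
    let H : ℝ := Ψ * (1 + 2 * R * b2) + s * Pi - R
    let E : ℝ := Θ * (1 + 2 * R * b2) + s * Ω
    E = (φ2 + 2 * s * φ1) / (2 * φ) - H * (s * φ + (b2 - s ^ 2) * φ2) / φ ∧
      H = (φ22 - 2 * (φ1 - s * φ12)) / (2 * Δ) := by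
  intro Δ _ R Θ Ψ Pi Ω H E
  have hΘΨ : Θ + Ψ * ((s * φ + (b2 - s ^ 2) * φ2) / φ) = φ2 / (2 * φ) :=
    theta_add_psi_mul_eq hφ hΔ rfl
  have hR : R * (b2 * φ2 - (s * φ + (b2 - s ^ 2) * φ2)) = -(s * φ1) :=
    ratio_mul_sub_eq_neg hreg
  refine ⟨?_, psi_add_pi_sub_ratio_eq hreg hΔ rfl⟩
  simp only [E, H, Ω]
  linear_combination (1 + 2 * R * b2) * hΘΨ + hR / φ
end

section
/- Let φ(b²,s) = (s²(ξe^{b⁴/2} − 1) + b²)·e^{b⁴/4}·s / (b²(b²−s²)) for constants ξ, on a region where b²(b²−s²) ≠ 0. Define E and H from φ via E = (φ₂+2sφ₁)/(2φ) − H(sφ+(b²−s²)φ₂)/φ and H = (φ₂₂−2(φ₁−sφ₁₂))/(2Δ), Δ = φ−sφ₂+(b²−s²)φ₂₂. Then E − sE₂ = 0 and H₂ − sH₂₂ = 0 (hence also E₂₂ = 0 and H₂₂₂ = 0) wherever the expressions are defined. -/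
noncomputable section

/-- Example 1 metric function: φ(b²,s) = (s²(ξe^{b⁴/2} − 1) + b²)e^{b⁴/4}s / (b²(b²−s²)). -/
def exPhi (ξ : ℝ) : ℝ → ℝ → ℝ := fun u s =>
  (s ^ 2 * (ξ * Real.exp (u ^ 2 / 2) - 1) + u) * Real.exp (u ^ 2 / 4) * s /
    (u * (u - s ^ 2))

/-- partial derivative ∂/∂b². -/
def exPhi1 (ξ : ℝ) : ℝ → ℝ → ℝ := fun u s => deriv (fun t => exPhi ξ t s) u

/-- partial derivative ∂/∂s. -/
def exPhi2 (ξ : ℝ) : ℝ → ℝ → ℝ := fun u s => deriv (fun v => exPhi ξ u v) s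

/-- partial derivative ∂²/∂s². -/
def exPhi22 (ξ : ℝ) : ℝ → ℝ → ℝ := fun u s => deriv (fun v => exPhi2 ξ u v) s

/-- mixed partial ∂²/∂b²∂s. -/
def exPhi12 (ξ : ℝ) : ℝ → ℝ → ℝ := fun u s => deriv (fun t => exPhi2 ξ t s) u

/-- Δ = φ − sφ₂ + (b²−s²)φ₂₂. -/
def exDelta (ξ : ℝ) : ℝ → ℝ → ℝ := fun u s =>
  exPhi ξ u s - s * exPhi2 ξ u s + (u - s ^ 2) * exPhi22 ξ u s

/-- H = (φ₂₂ − 2(φ₁ − sφ₁₂))/(2Δ). -/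
def exH (ξ : ℝ) : ℝ → ℝ → ℝ := fun u s =>
  (exPhi22 ξ u s - 2 * (exPhi1 ξ u s - s * exPhi12 ξ u s)) / (2 * exDelta ξ u s)

/-- E = (φ₂+2sφ₁)/(2φ) − H(sφ+(b²−s²)φ₂)/φ. -/
def exE (ξ : ℝ) : ℝ → ℝ → ℝ := fun u s =>
  (exPhi2 ξ u s + 2 * s * exPhi1 ξ u s) / (2 * exPhi ξ u s) -
    exH ξ u s * (s * exPhi ξ u s + (u - s ^ 2) * exPhi2 ξ u s) / exPhi ξ u s

/-! Write `t = b²`. Where `t ≠ 0` and `t ≠ s²`, `φ = P(t) s + Q(t) s / (t − s²)` with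
`Q(t) = ξ e^{3t²/4}` and `P(t) = (e^{t²/4} − Q(t)) / t`, and these coefficients solve the linear ODEs
`Q' = (3t/2) Q`, `P' = (t/2 − 1/t) P − Q`. All partial derivatives of `φ` are then rational in `s`
with coefficients `P, Q`, and the two ODEs make the spray coefficients collapse to
`H = 1/(2t) + s²/2` and `E = −s/t`, from which the four identities are immediate. -/

open Filter Topology

def exP (ξ t : ℝ) : ℝ := (Real.exp (t ^ 2 / 4) - ξ * Real.exp (3 * t ^ 2 / 4)) / t

def exQ (ξ t : ℝ) : ℝ := ξ * Real.exp (3 * t ^ 2 / 4)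

lemma hasDerivAt_exp_mul_sq_div_four (c t : ℝ) :
    HasDerivAt (fun t : ℝ => Real.exp (c * t ^ 2 / 4)) (c * t / 2 * Real.exp (c * t ^ 2 / 4)) t := by
  have h := (((hasDerivAt_pow 2 t).const_mul c).div_const 4).exp
  exact h.congr_deriv (by push_cast; ring)

lemma hasDerivAt_exQ (ξ t : ℝ) : HasDerivAt (exQ ξ) (3 * t / 2 * exQ ξ t) t :=
  ((hasDerivAt_exp_mul_sq_div_four 3 t).const_mul ξ).congr_deriv (by simp only [exQ]; ring)

lemma hasDerivAt_exP (ξ : ℝ) {t : ℝ} (ht : t ≠ 0) :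
    HasDerivAt (exP ξ) ((t / 2 - 1 / t) * exP ξ t - exQ ξ t) t := by
  have hexp : HasDerivAt (fun t : ℝ => Real.exp (t ^ 2 / 4)) (t / 2 * Real.exp (t ^ 2 / 4)) t := by
    simpa using hasDerivAt_exp_mul_sq_div_four 1 t
  have h := (hexp.sub (hasDerivAt_exQ ξ t)).div (hasDerivAt_id t) ht
  refine h.congr_deriv ?_
  simp only [exP, exQ, id, Pi.sub_apply]
  field_simp
  ring

lemma exPhi_eq {ξ t v : ℝ} (ht : t ≠ 0) (hv : t - v ^ 2 ≠ 0) :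
    exPhi ξ t v = exP ξ t * v + exQ ξ t * v / (t - v ^ 2) := by
  have hexp : Real.exp (3 * t ^ 2 / 4) = Real.exp (t ^ 2 / 2) * Real.exp (t ^ 2 / 4) := by
    rw [← Real.exp_add]; ring_nf
  simp only [exPhi, exP, exQ, hexp]
  field_simp
  ring

section RationalInS

variable {a c t v : ℝ}

lemma hasDerivAt_mul_add_div_sub_sq (hv : t - v ^ 2 ≠ 0) :
    HasDerivAt (fun w => a * w + c * w / (t - w ^ 2)) (a + c * (t + v ^ 2) / (t - v ^ 2) ^ 2) v := by
  have hden : HasDerivAt (fun w : ℝ => t - w ^ 2) (-(2 * v)) v := by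
    simpa using (hasDerivAt_pow 2 v).const_sub t
  have h := ((hasDerivAt_id' v).const_mul a).add (((hasDerivAt_id' v).const_mul c).div hden hv)
  refine h.congr_deriv ?_
  field_simp
  ring

lemma hasDerivAt_add_div_sub_sq_sq (hv : t - v ^ 2 ≠ 0) :
    HasDerivAt (fun w => a + c * (t + w ^ 2) / (t - w ^ 2) ^ 2)
      (2 * c * v * (3 * t + v ^ 2) / (t - v ^ 2) ^ 3) v := by
  have hnum : HasDerivAt (fun w : ℝ => c * (t + w ^ 2)) (c * (2 * v)) v := by
    simpa using ((hasDerivAt_pow 2 v).const_add t).const_mul c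
  have hden : HasDerivAt (fun w : ℝ => (t - w ^ 2) ^ 2) (2 * (t - v ^ 2) * -(2 * v)) v := by
    simpa using ((hasDerivAt_pow 2 v).const_sub t).fun_pow 2
  refine ((hnum.div hden (pow_ne_zero 2 hv)).const_add a).congr_deriv ?_
  field_simp
  ring

end RationalInS

section RationalInT

variable {P Q : ℝ → ℝ} {p q t v : ℝ}

lemma HasDerivAt.mul_add_div_sub_sq (hP : HasDerivAt P p t) (hQ : HasDerivAt Q q t)
    (hv : t - v ^ 2 ≠ 0) :
    HasDerivAt (fun r => P r * v + Q r * v / (r - v ^ 2))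
      (p * v + q * v / (t - v ^ 2) - Q t * v / (t - v ^ 2) ^ 2) t := by
  have h := (hP.mul_const v).add ((hQ.mul_const v).div ((hasDerivAt_id' t).sub_const (v ^ 2)) hv)
  refine h.congr_deriv ?_
  field_simp
  ring

lemma HasDerivAt.add_mul_div_sub_sq_sq (hP : HasDerivAt P p t) (hQ : HasDerivAt Q q t)
    (hv : t - v ^ 2 ≠ 0) :
    HasDerivAt (fun r => P r + Q r * (r + v ^ 2) / (r - v ^ 2) ^ 2)
      (p + q * (t + v ^ 2) / (t - v ^ 2) ^ 2 - Q t * (t + 3 * v ^ 2) / (t - v ^ 2) ^ 3) t := by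
  have hden : HasDerivAt (fun r => (r - v ^ 2) ^ 2) (2 * (t - v ^ 2)) t := by
    simpa using (hasDerivAt_id' t |>.sub_const (v ^ 2)).fun_pow 2
  have h := hP.add ((hQ.fun_mul ((hasDerivAt_id' t).add_const (v ^ 2))).div hden (pow_ne_zero 2 hv))
  refine h.congr_deriv ?_
  field_simp
  ring

end RationalInT

lemma eventually_sub_sq_ne {t v : ℝ} (hv : t - v ^ 2 ≠ 0) : ∀ᶠ w in 𝓝 v, t - w ^ 2 ≠ 0 :=
  (by fun_prop : Continuous fun w : ℝ => t - w ^ 2).continuousAt.eventually_ne hv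

lemma eventually_ne_zero_and_sub_sq_ne {t v : ℝ} (ht : t ≠ 0) (hv : t - v ^ 2 ≠ 0) :
    ∀ᶠ r in 𝓝 t, r ≠ 0 ∧ r - v ^ 2 ≠ 0 :=
  (eventually_ne_nhds ht).and
    ((by fun_prop : Continuous fun r : ℝ => r - v ^ 2).continuousAt.eventually_ne hv)

section PartialDerivatives

variable {ξ t v : ℝ}

lemma exPhi2_eq (ht : t ≠ 0) (hv : t - v ^ 2 ≠ 0) :
    exPhi2 ξ t v = exP ξ t + exQ ξ t * (t + v ^ 2) / (t - v ^ 2) ^ 2 := by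
  have h : exPhi ξ t =ᶠ[𝓝 v] fun w => exP ξ t * w + exQ ξ t * w / (t - w ^ 2) :=
    (eventually_sub_sq_ne hv).mono fun w hw => exPhi_eq ht hw
  exact h.deriv_eq.trans (hasDerivAt_mul_add_div_sub_sq hv).deriv

lemma exPhi22_eq (ht : t ≠ 0) (hv : t - v ^ 2 ≠ 0) :
    exPhi22 ξ t v = 2 * exQ ξ t * v * (3 * t + v ^ 2) / (t - v ^ 2) ^ 3 := by
  have h : exPhi2 ξ t =ᶠ[𝓝 v] fun w => exP ξ t + exQ ξ t * (t + w ^ 2) / (t - w ^ 2) ^ 2 :=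
    (eventually_sub_sq_ne hv).mono fun w hw => exPhi2_eq ht hw
  exact h.deriv_eq.trans (hasDerivAt_add_div_sub_sq_sq hv).deriv

lemma exPhi1_eq (ht : t ≠ 0) (hv : t - v ^ 2 ≠ 0) :
    exPhi1 ξ t v = ((t / 2 - 1 / t) * exP ξ t - exQ ξ t) * v +
      3 * t / 2 * exQ ξ t * v / (t - v ^ 2) - exQ ξ t * v / (t - v ^ 2) ^ 2 := by
  have h : (fun r => exPhi ξ r v) =ᶠ[𝓝 t] fun r => exP ξ r * v + exQ ξ r * v / (r - v ^ 2) :=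
    (eventually_ne_zero_and_sub_sq_ne ht hv).mono fun r hr => exPhi_eq hr.1 hr.2
  exact h.deriv_eq.trans
    ((hasDerivAt_exP ξ ht).mul_add_div_sub_sq (hasDerivAt_exQ ξ t) hv).deriv

lemma exPhi12_eq (ht : t ≠ 0) (hv : t - v ^ 2 ≠ 0) :
    exPhi12 ξ t v = (t / 2 - 1 / t) * exP ξ t - exQ ξ t +
      3 * t / 2 * exQ ξ t * (t + v ^ 2) / (t - v ^ 2) ^ 2 -
      exQ ξ t * (t + 3 * v ^ 2) / (t - v ^ 2) ^ 3 := by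
  have h : (fun r => exPhi2 ξ r v) =ᶠ[𝓝 t]
      fun r => exP ξ r + exQ ξ r * (r + v ^ 2) / (r - v ^ 2) ^ 2 :=
    (eventually_ne_zero_and_sub_sq_ne ht hv).mono fun r hr => exPhi2_eq hr.1 hr.2
  exact h.deriv_eq.trans
    ((hasDerivAt_exP ξ ht).add_mul_div_sub_sq_sq (hasDerivAt_exQ ξ t) hv).deriv

end PartialDerivatives

section SprayCoefficients

variable {ξ t v : ℝ}

lemma exDelta_eq (ht : t ≠ 0) (hv : t - v ^ 2 ≠ 0) :
    exDelta ξ t v = 6 * exQ ξ t * t * v / (t - v ^ 2) ^ 2 := by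
  simp only [exDelta]
  rw [exPhi_eq ht hv, exPhi2_eq ht hv, exPhi22_eq ht hv]
  field_simp
  ring

lemma exH_eq (ht : t ≠ 0) (hv : t - v ^ 2 ≠ 0) (hξ : ξ ≠ 0) (hv₀ : v ≠ 0) :
    exH ξ t v = 1 / (2 * t) + v ^ 2 / 2 := by
  have hQ : exQ ξ t ≠ 0 := mul_ne_zero hξ (Real.exp_pos _).ne'
  simp only [exH]
  rw [exPhi22_eq ht hv, exPhi1_eq ht hv, exPhi12_eq ht hv, exDelta_eq ht hv]
  field_simp
  ring

lemma exE_eq (ht : t ≠ 0) (hv : t - v ^ 2 ≠ 0) (hξ : ξ ≠ 0) (hφ : exPhi ξ t v ≠ 0) :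
    exE ξ t v = -(v / t) := by
  have hv₀ : v ≠ 0 := by
    rintro rfl
    simp [exPhi] at hφ
  have hnum : exPhi2 ξ t v + 2 * v * exPhi1 ξ t v -
      2 * exH ξ t v * (v * exPhi ξ t v + (t - v ^ 2) * exPhi2 ξ t v) =
      -(2 * v / t) * exPhi ξ t v := by
    rw [exH_eq ht hv hξ hv₀, exPhi_eq ht hv, exPhi2_eq ht hv, exPhi1_eq ht hv]
    field_simp
    ring
  calc exE ξ t v
      = (exPhi2 ξ t v + 2 * v * exPhi1 ξ t v -
          2 * exH ξ t v * (v * exPhi ξ t v + (t - v ^ 2) * exPhi2 ξ t v)) / (2 * exPhi ξ t v) := by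
        simp only [exE]
        field_simp
    _ = -(v / t) := by
        rw [hnum]
        field_simp

end SprayCoefficients

/-- for the example metric, E − sE₂ = 0 and H₂ − sH₂₂ = 0,
    hence also E₂₂ = 0 and H₂₂₂ = 0, wherever defined. -/
theorem stmt_13 (ξ : ℝ) (u s : ℝ) (hu : u ≠ 0) (hs : u - s ^ 2 ≠ 0)
    (hΔ : exDelta ξ u s ≠ 0) (hφ : exPhi ξ u s ≠ 0) :
    exE ξ u s - s * deriv (fun v => exE ξ u v) s = 0 ∧
    deriv (fun v => exH ξ u v) s - s * deriv (fun v => deriv (fun w => exH ξ u w) v) s = 0 ∧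
    deriv (fun v => deriv (fun w => exE ξ u w) v) s = 0 ∧
    deriv (fun v => deriv (fun w => deriv (fun r => exH ξ u r) w) v) s = 0 := by
  rw [exDelta_eq hu hs] at hΔ
  have hξ : ξ ≠ 0 := by rintro rfl; simp [exQ] at hΔ
  have hs₀ : s ≠ 0 := by rintro rfl; simp at hΔ
  -- `exE` takes the junk value `0` where `φ = 0`, so `φ ≠ 0` is needed on a neighbourhood of `s`.
  have hφ_cont : ContinuousAt (exPhi ξ u) s := by
    unfold exPhi
    fun_prop (disch := exact mul_ne_zero hu hs)
  have hH : exH ξ u =ᶠ[𝓝 s] fun v => 1 / (2 * u) + v ^ 2 / 2 :=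
    ((eventually_sub_sq_ne hs).and (eventually_ne_nhds hs₀)).mono
      fun v hv => exH_eq hu hv.1 hξ hv.2
  have hE : exE ξ u =ᶠ[𝓝 s] fun v => -(v / u) :=
    ((eventually_sub_sq_ne hs).and (hφ_cont.eventually_ne hφ)).mono
      fun v hv => exE_eq hu hv.1 hξ hv.2
  have hH_deriv : deriv (fun v : ℝ => 1 / (2 * u) + v ^ 2 / 2) = id := by
    funext v
    simp
  rw [hE.eq_of_nhds, hE.deriv_eq, hE.deriv.deriv_eq, hH.deriv_eq, hH.deriv.deriv_eq,
    hH.deriv.deriv.deriv_eq, hH_deriv]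
  simp [div_eq_mul_inv]

end
end
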